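/- arXiv:1412.6058 — 6 statements merged into one kernel-verified Lean document; each statement's English description precedes it below -/
import Mathlib

section
/- Fix k. Suppose ∇g_k is L_k-Lipschitz, and suppose that at iterations t and t+1 the dual variable satisfies y_k^t = −∇g_k(x^{τ_k(t)}) and y_k^{t+1} = −∇g_k(x^{τ_k(t+1)}), where the delay indices satisfy τ_k(t) ≤ t, τ_k(t+1) ≤ t+1, τ_k(t) + T_k ≥ t and τ_k(t+1) + T_k ≥ t+1. Then for every t ≥ T_k: ‖y_k^{t+1} − y_k^t‖ ≤ L_k Σ_{i=0}^{T_k} ‖x^{t+1−i} − x^{t−i}‖. -/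
lemma tele_bound {E : Type*} [NormedAddCommGroup E] (x : ℕ → E) :
    ∀ m n : ℕ, m ≤ n → ‖x n - x m‖ ≤ ∑ j ∈ Finset.Ico m n, ‖x (j + 1) - x j‖ := by
  intro m n hmn
  induction n, hmn using Nat.le_induction with
  | base => simp
  | succ n hmn ih =>
    rw [Finset.sum_Ico_succ_top hmn]
    calc ‖x (n + 1) - x m‖ ≤ ‖x n - x m‖ + ‖x (n + 1) - x n‖ := by
          have := norm_add_le (x n - x m) (x (n + 1) - x n)
          simpa [sub_add_sub_cancel'] using this
      _ ≤ _ := by linarith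

/-- Dual-variable difference bound from delayed gradients: if the dual variables
equal minus the delayed gradients and the delays are bounded by `T`, then the
successive dual difference is bounded by `L` times the sum of the last `T + 1`
successive primal differences. -/
theorem stmt_1 {E : Type*} [NormedAddCommGroup E] [InnerProductSpace ℝ E] [CompleteSpace E]
    (g : E → ℝ) (L : ℝ) (hL : 0 < L)
    (hlip : ∀ u v : E, ‖gradient g u - gradient g v‖ ≤ L * ‖u - v‖)
    (x y : ℕ → E) (τ : ℕ → ℕ) (T t : ℕ) (ht : T ≤ t)
    (hτ1 : τ t ≤ t) (hτ2 : τ (t + 1) ≤ t + 1)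
    (hτ3 : t ≤ τ t + T) (hτ4 : t + 1 ≤ τ (t + 1) + T)
    (hy1 : y t = -gradient g (x (τ t)))
    (hy2 : y (t + 1) = -gradient g (x (τ (t + 1)))) :
    ‖y (t + 1) - y t‖ ≤ L * ∑ i ∈ Finset.range (T + 1), ‖x (t + 1 - i) - x (t - i)‖ := by
  have hsum : ∑ i ∈ Finset.range (T + 1), ‖x (t + 1 - i) - x (t - i)‖
      = ∑ j ∈ Finset.Ico (t - T) (t + 1), ‖x (j + 1) - x j‖ := by
    apply Finset.sum_nbij' (fun i => t - i) (fun j => t - j)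
    · intro i hi
      simp only [Finset.mem_range] at hi
      simp only [Finset.mem_Ico]
      omega
    · intro j hj
      simp only [Finset.mem_Ico] at hj
      simp only [Finset.mem_range]
      omega
    · intro i hi; simp only [Finset.mem_range] at hi; omega
    · intro j hj; simp only [Finset.mem_Ico] at hj; omega
    · intro i hi
      simp only [Finset.mem_range] at hi
      have : t + 1 - i = (t - i) + 1 := by omega
      rw [this]
  rw [hsum, hy1, hy2]
  have h1 : ‖-gradient g (x (τ (t + 1))) - -gradient g (x (τ t))‖
      = ‖gradient g (x (τ (t + 1))) - gradient g (x (τ t))‖ := by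
    rw [neg_sub_neg, norm_sub_rev]
  rw [h1]
  calc ‖gradient g (x (τ (t + 1))) - gradient g (x (τ t))‖
      ≤ L * ‖x (τ (t + 1)) - x (τ t)‖ := hlip _ _
    _ ≤ L * ∑ j ∈ Finset.Ico (t - T) (t + 1), ‖x (j + 1) - x j‖ := by
        apply mul_le_mul_of_nonneg_left _ hL.le
        set a := τ (t + 1); set b := τ t
        rcases le_total b a with hab | hab
        · calc ‖x a - x b‖ ≤ ∑ j ∈ Finset.Ico b a, ‖x (j + 1) - x j‖ := tele_bound x b a hab
            _ ≤ _ := Finset.sum_le_sum_of_subset_of_nonneg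
                (Finset.Ico_subset_Ico (by omega) (by omega))
                (fun _ _ _ => norm_nonneg _)
        · rw [← norm_neg, neg_sub]
          calc ‖x b - x a‖ ≤ ∑ j ∈ Finset.Ico a b, ‖x (j + 1) - x j‖ := tele_bound x a b hab
            _ ≤ _ := Finset.sum_le_sum_of_subset_of_nonneg
                (Finset.Ico_subset_Ico (by omega) (by omega))
                (fun _ _ _ => norm_nonneg _)
end

section
/- Let g : E → ℝ be differentiable with L-Lipschitz gradient (L > 0), ρ > 0, and fix points x⁺, w, y ∈ E. Define u(z) := g(x⁺) + ⟨∇g(x⁺), z − x⁺⟩ + ⟨y, z − x⁺⟩ + (ρ/2)‖z − x⁺‖², and let z* := x⁺ − (1/ρ)(∇g(w) + y) (the minimizer of the delayed linearized subproblem). Then for every z ∈ E: u(z*) ≤ u(z) + (L/2)‖w − x⁺‖² − ((ρ − L)/2)‖z* − z‖². -/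
open RealInnerProductSpace

/-- Estimate (25) in the proof of Lemma 3.2: `z*` minimizes the ρ-strongly convex
delayed linearized subproblem, and the error from using the delayed gradient
`∇g(w)` in place of `∇g(x⁺)` is controlled by `L‖w − x⁺‖`. -/
theorem stmt_5 {E : Type*} [NormedAddCommGroup E] [InnerProductSpace ℝ E] [CompleteSpace E]
    (g : E → ℝ) (L ρ : ℝ) (hL : 0 < L) (hρ : 0 < ρ)
    (hdiff : Differentiable ℝ g)
    (hlip : ∀ u v : E, ‖gradient g u - gradient g v‖ ≤ L * ‖u - v‖)
    (xp w y : E) (u : E → ℝ)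
    (hu : ∀ z : E, u z = g xp + ⟪gradient g xp, z - xp⟫ + ⟪y, z - xp⟫
      + ρ / 2 * ‖z - xp‖ ^ 2)
    (zstar : E) (hzstar : zstar = xp - ρ⁻¹ • (gradient g w + y)) :
    ∀ z : E, u zstar ≤ u z + L / 2 * ‖w - xp‖ ^ 2 - (ρ - L) / 2 * ‖zstar - z‖ ^ 2 := by
  intro z
  set a := gradient g xp with ha
  set b := gradient g w with hb
  set v := z - zstar with hv
  have hp : zstar - xp = -(ρ⁻¹ • (b + y)) := by rw [hzstar]; abel
  have hz : z - xp = v + (zstar - xp) := by rw [hv]; abel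
  have e1 : ⟪a, z - xp⟫ = ⟪a, v⟫ + ⟪a, zstar - xp⟫ := by rw [hz, inner_add_right]
  have e2 : ⟪y, z - xp⟫ = ⟪y, v⟫ + ⟪y, zstar - xp⟫ := by rw [hz, inner_add_right]
  have e3 : ‖z - xp‖ ^ 2 = ‖v‖ ^ 2 + 2 * ⟪v, zstar - xp⟫ + ‖zstar - xp‖ ^ 2 := by
    rw [hz, norm_add_sq_real]
  have e4 : ρ * ⟪v, zstar - xp⟫ = -⟪b, v⟫ - ⟪y, v⟫ := by
    rw [hp, inner_neg_right, real_inner_smul_right, inner_add_right,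
      real_inner_comm v b, real_inner_comm v y]
    field_simp
    ring
  have e5 : ‖zstar - z‖ = ‖v‖ := by rw [hv, norm_sub_rev]
  have key : ‖a - b‖ ≤ L * ‖xp - w‖ := hlip xp w
  have h2 : ⟪a - b, v⟫ = ⟪a, v⟫ - ⟪b, v⟫ := by rw [inner_sub_left]
  have h3 : ‖w - xp‖ = ‖xp - w‖ := norm_sub_rev _ _
  have habs := abs_le.mp (abs_real_inner_le_norm (a - b) v)
  have hn1 : (0:ℝ) ≤ ‖v‖ := norm_nonneg _
  have hn2 : (0:ℝ) ≤ ‖xp - w‖ := norm_nonneg _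
  rw [hu z, hu zstar, e1, e2, e3, e5, h3]
  nlinarith [sq_nonneg (‖xp - w‖ - ‖v‖), mul_le_mul_of_nonneg_right key hn1,
    mul_nonneg hn1 hn2, e4, h2, habs.1, habs.2]
end

section
/- (Lemma 3.2) Under the Async-PADMM update rules, define ℓ_k(z) := g_k(z) + ⟨y_k^t, z − x^{t+1}⟩ + (ρ_k/2)‖z − x^{t+1}‖². Then for every k and every t ≥ T_k: ℓ_k(x_k^{t+1}) − ℓ_k(x_k^t) ≤ −(ρ_k/2 − (7/2)L_k)‖x_k^t − x_k^{t+1}‖² + (L_k T_k/2) Σ_{i=0}^{T_k−1} ‖x^{t+1−i} − x^{t−i}‖² + (7L_k/(2ρ_k²)) ‖y_k^{t+1} − y_k^t‖². -/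
open RealInnerProductSpace Finset

/-!
Write `a = x_k^{t+1}`, `b = x_k^t` and `z = x^{τ_k(t+1)}`. The update for `a` is the
optimality condition of `ℓ_k` with `g_k` linearized at `z`, which makes
`ℓ_k(a) - ℓ_k(b) = g_k(a) - g_k(b) - ⟨∇g_k(z), a - b⟩ - (ρ_k/2)‖a - b‖²`.
The mean value theorem and the Lipschitz gradient bound the linearization error by
`L_k (‖a - b‖ + ‖a - z‖) ‖a - b‖`. By the dual update `‖a - x^{t+1}‖ = ‖y_k^{t+1} - y_k^t‖ / ρ_k`,
and since the delay is at most `T_k`, telescoping and Cauchy–Schwarz give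
`‖x^{t+1} - z‖² ≤ T_k ∑_{i<T_k} ‖x^{t+1-i} - x^{t-i}‖²`. AM–GM on the cross terms finishes.
-/

section
variable {E : Type*} [NormedAddCommGroup E]

theorem norm_sub_sq_le_mul_sum_sq_of_le_add (u : ℕ → E) {m t T : ℕ} (hm : m ≤ t + 1)
    (hT : t + 1 ≤ m + T) :
    ‖u (t + 1) - u m‖ ^ 2 ≤ T * ∑ i ∈ range T, ‖u (t + 1 - i) - u (t - i)‖ ^ 2 := by
  set n := t + 1 - m
  have htel : u (t + 1) - u m = ∑ i ∈ range n, (u (t + 1 - i) - u (t - i)) := by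
    have h := sum_range_sub' (fun i => u (t + 1 - i)) n
    simp only [Nat.add_sub_add_right, Nat.sub_zero] at h
    rw [h, Nat.sub_sub_self hm]
  calc ‖u (t + 1) - u m‖ ^ 2 ≤ (∑ i ∈ range n, ‖u (t + 1 - i) - u (t - i)‖) ^ 2 := by
        rw [htel]; gcongr; exact norm_sum_le _ _
    _ ≤ n * ∑ i ∈ range n, ‖u (t + 1 - i) - u (t - i)‖ ^ 2 := by
        simpa using sq_sum_le_card_mul_sum_sq (s := range n)
          (f := fun i => ‖u (t + 1 - i) - u (t - i)‖)
    _ ≤ T * ∑ i ∈ range T, ‖u (t + 1 - i) - u (t - i)‖ ^ 2 := by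
        have hn : n ≤ T := by omega
        gcongr

variable [InnerProductSpace ℝ E]

theorem sub_sub_inner_gradient_le [CompleteSpace E] {f : E → ℝ} {L : ℝ}
    (hf : Differentiable ℝ f) (hL : 0 ≤ L)
    (hlip : ∀ u v, ‖gradient f u - gradient f v‖ ≤ L * ‖u - v‖) (a b z : E) :
    f a - f b - ⟪gradient f z, a - b⟫ ≤ L * (‖a - b‖ + ‖a - z‖) * ‖a - b‖ := by
  obtain ⟨ξ, hξ, hmvt⟩ := domain_mvt (s := Set.univ) (f' := fderiv ℝ f)
    (fun w _ => (hf w).hasFDerivAt.hasFDerivWithinAt) convex_univ trivial (Set.mem_univ a)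
  have hξz : ‖ξ - z‖ ≤ ‖a - b‖ + ‖a - z‖ :=
    calc ‖ξ - z‖ ≤ ‖ξ - a‖ + ‖a - z‖ := norm_sub_le_norm_sub_add_norm_sub _ _ _
      _ ≤ ‖a - b‖ + ‖a - z‖ := by
        gcongr
        rw [← norm_sub_rev b a]
        exact norm_sub_le_of_mem_segment (segment_symm ℝ b a ▸ hξ)
  calc f a - f b - ⟪gradient f z, a - b⟫ = ⟪gradient f ξ - gradient f z, a - b⟫ := by
        rw [hmvt, ← inner_gradient_left, inner_sub_left]
    _ ≤ ‖gradient f ξ - gradient f z‖ * ‖a - b‖ := real_inner_le_norm _ _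
    _ ≤ L * ‖ξ - z‖ * ‖a - b‖ := by gcongr; exact hlip _ _
    _ ≤ L * (‖a - b‖ + ‖a - z‖) * ‖a - b‖ := by gcongr

theorem inner_add_norm_sq_sub_eq_of_prox {ρ : ℝ} (hρ : ρ ≠ 0) {p y w a : E}
    (ha : a = w - ρ⁻¹ • (p + y)) (b : E) :
    (⟪y, a - w⟫ + ρ / 2 * ‖a - w‖ ^ 2) - (⟪y, b - w⟫ + ρ / 2 * ‖b - w‖ ^ 2)
      = -⟪p, a - b⟫ - ρ / 2 * ‖a - b‖ ^ 2 := by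
  have hopt : y + ρ • (a - w) = -p := by
    rw [ha, sub_sub_cancel_left, smul_neg, smul_smul, mul_inv_cancel₀ hρ, one_smul]
    abel
  have hinner : ⟪y, a - b⟫ + ρ * ⟪a - w, a - b⟫ = -⟪p, a - b⟫ := by
    rw [← real_inner_smul_left, ← inner_add_left, hopt, inner_neg_left]
  have hbw : b - w = (a - w) - (a - b) := by abel
  rw [hbw, norm_sub_sq_real (a - w) (a - b), inner_sub_right y (a - w) (a - b)]
  linarith

end

theorem stmt_6_general {E : Type*} [NormedAddCommGroup E] [InnerProductSpace ℝ E] [CompleteSpace E]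
    {K : ℕ} (g : Fin K → E → ℝ) (L ρ : Fin K → ℝ) (T : Fin K → ℕ)
    (x : ℕ → E) (xk : Fin K → ℕ → E) (y : Fin K → ℕ → E) (τ : Fin K → ℕ → ℕ)
    (hL : ∀ k, 0 < L k) (hρ : ∀ k, 0 < ρ k)
    (hdiff : ∀ k, Differentiable ℝ (g k))
    (hlip : ∀ k, ∀ u v : E, ‖gradient (g k) u - gradient (g k) v‖ ≤ L k * ‖u - v‖)
    (hτ1 : ∀ k t, τ k t ≤ t) (hτ2 : ∀ k t, t ≤ τ k t + T k)
    (hxk : ∀ k t, xk k (t + 1)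
      = x (t + 1) - (ρ k)⁻¹ • (gradient (g k) (x (τ k (t + 1))) + y k t))
    (hy : ∀ k t, y k (t + 1) = y k t + ρ k • (xk k (t + 1) - x (t + 1)))
    (k : Fin K) (t : ℕ)
    (ℓ : E → ℝ)
    (hℓ : ∀ z : E, ℓ z = g k z + ⟪y k t, z - x (t + 1)⟫ + ρ k / 2 * ‖z - x (t + 1)‖ ^ 2) :
    ℓ (xk k (t + 1)) - ℓ (xk k t)
      ≤ -(ρ k / 2 - 7 / 2 * L k) * ‖xk k t - xk k (t + 1)‖ ^ 2
        + L k * (T k : ℝ) / 2 * ∑ i ∈ Finset.range (T k), ‖x (t + 1 - i) - x (t - i)‖ ^ 2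
        + 7 * L k / (2 * ρ k ^ 2) * ‖y k (t + 1) - y k t‖ ^ 2 := by
  set a := xk k (t + 1)
  set b := xk k t
  set z := x (τ k (t + 1))
  have hdual : ‖y k (t + 1) - y k t‖ = ρ k * ‖a - x (t + 1)‖ := by
    rw [hy, add_sub_cancel_left, norm_smul, Real.norm_of_nonneg (hρ k).le]
  have hdescent :
      ℓ a - ℓ b ≤ L k * (‖b - a‖ + ‖a - z‖) * ‖b - a‖ - ρ k / 2 * ‖b - a‖ ^ 2 := by
    have hprox := inner_add_norm_sq_sub_eq_of_prox (hρ k).ne' (hxk k t) b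
    have hlin := sub_sub_inner_gradient_le (hdiff k) (hL k).le (hlip k) a b z
    rw [hℓ, hℓ, norm_sub_rev b a]
    linarith
  have hsplit : ‖a - z‖ ≤ ‖a - x (t + 1)‖ + ‖x (t + 1) - z‖ :=
    norm_sub_le_norm_sub_add_norm_sub _ _ _
  have hdelay := norm_sub_sq_le_mul_sum_sq_of_le_add x (hτ1 k (t + 1)) (hτ2 k (t + 1))
  have hdual_sq : 7 * L k / (2 * ρ k ^ 2) * (ρ k * ‖a - x (t + 1)‖) ^ 2
      = 7 / 2 * L k * ‖a - x (t + 1)‖ ^ 2 := by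
    field_simp [(hρ k).ne']
  rw [hdual, hdual_sq]
  have hL0 := (hL k).le
  nlinarith [mul_nonneg hL0 (sq_nonneg (‖b - a‖ - ‖a - x (t + 1)‖)),
    mul_nonneg hL0 (sq_nonneg (‖b - a‖ - ‖x (t + 1) - z‖)),
    mul_nonneg hL0 (sq_nonneg ‖b - a‖), mul_nonneg hL0 (sq_nonneg ‖a - x (t + 1)‖),
    mul_le_mul_of_nonneg_left hsplit (mul_nonneg hL0 (norm_nonneg (b - a))),
    mul_le_mul_of_nonneg_left hdelay hL0]

/-- (Lemma 3.2) Under the Async-PADMM update rules, with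
`ℓ_k(z) := g_k(z) + ⟨y_k^t, z − x^{t+1}⟩ + (ρ_k/2)‖z − x^{t+1}‖²`, for every `k`
and every `t ≥ T_k`:
`ℓ_k(x_k^{t+1}) − ℓ_k(x_k^t) ≤ −(ρ_k/2 − (7/2)L_k)‖x_k^t − x_k^{t+1}‖²
  + (L_k T_k/2) ∑_{i=0}^{T_k−1} ‖x^{t+1−i} − x^{t−i}‖²
  + (7L_k/(2ρ_k²)) ‖y_k^{t+1} − y_k^t‖²`. -/
theorem stmt_6 {E : Type*} [NormedAddCommGroup E] [InnerProductSpace ℝ E] [CompleteSpace E]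
    {K : ℕ} (g : Fin K → E → ℝ) (L ρ : Fin K → ℝ) (T : Fin K → ℕ)
    (x : ℕ → E) (xk : Fin K → ℕ → E) (y : Fin K → ℕ → E) (τ : Fin K → ℕ → ℕ)
    (hL : ∀ k, 0 < L k) (hρ : ∀ k, 0 < ρ k)
    (hdiff : ∀ k, Differentiable ℝ (g k))
    (hlip : ∀ k, ∀ u v : E, ‖gradient (g k) u - gradient (g k) v‖ ≤ L k * ‖u - v‖)
    (hτ1 : ∀ k t, τ k t ≤ t) (hτ2 : ∀ k t, t ≤ τ k t + T k)
    (hxk : ∀ k t, xk k (t + 1)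
      = x (t + 1) - (ρ k)⁻¹ • (gradient (g k) (x (τ k (t + 1))) + y k t))
    (hy : ∀ k t, y k (t + 1) = y k t + ρ k • (xk k (t + 1) - x (t + 1)))
    (k : Fin K) (t : ℕ) (ht : T k ≤ t)
    (ℓ : E → ℝ)
    (hℓ : ∀ z : E, ℓ z = g k z + ⟪y k t, z - x (t + 1)⟫ + ρ k / 2 * ‖z - x (t + 1)‖ ^ 2) :
    ℓ (xk k (t + 1)) - ℓ (xk k t)
      ≤ -(ρ k / 2 - 7 / 2 * L k) * ‖xk k t - xk k (t + 1)‖ ^ 2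
        + L k * (T k : ℝ) / 2 * ∑ i ∈ Finset.range (T k), ‖x (t + 1 - i) - x (t - i)‖ ^ 2
        + 7 * L k / (2 * ρ k ^ 2) * ‖y k (t + 1) - y k t‖ ^ 2 :=
  stmt_6_general g L ρ T x xk y τ hL hρ hdiff hlip hτ1 hτ2 hxk hy k t ℓ hℓ
end

section
/- (Lemma 3.3) Under the Async-PADMM update rules, there exists a constant C ∈ ℝ such that for all t ≥ 1: L({x_k^{t+1}}, x^{t+1}; y^{t+1}) ≤ C − Σ_{i=T̄}^{t} Σ_{k=1}^K [ ((ρ_k − 7L_k)/2)‖x_k^{i+1} − x_k^i‖² + (α_k/2)‖x^{i+1} − x^i‖² ], where T̄ := max_k T_k and α_k := ρ_k − 2(1/ρ_k + 7L_k/(2ρ_k²)) L_k²(T_k+1)² − L_k T_k². -/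
open RealInnerProductSpace

/-- The augmented Lagrangian of the consensus problem. -/
noncomputable def augL {E : Type*} [NormedAddCommGroup E] [InnerProductSpace ℝ E]
    {K : ℕ} (g : Fin K → E → ℝ) (h : E → ℝ) (ρ : Fin K → ℝ)
    (xk : Fin K → E) (x : E) (y : Fin K → E) : ℝ :=
  (∑ k, g k (xk k)) + h x + (∑ k, ⟪y k, xk k - x⟫) + ∑ k, ρ k / 2 * ‖xk k - x‖ ^ 2

/-!
Each sweep of Async-PADMM changes the augmented Lagrangian `L^t` in three ways. The `x`-update
minimizes a `(∑ ρ_k)`-strongly convex function over `X`, which gains `(∑ ρ_k)/2 ‖x^{t+1} - x^t‖²`.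
The `x_k`-update is a linearized proximal step: by the descent lemma and the Lipschitz gradients it
gains `(ρ_k - 7L_k)/2 ‖x_k^{t+1} - x_k^t‖²`, up to an error from the delay `x^{t+1} - x^{τ_k(t+1)}`.
The dual update costs `ρ_k ‖x_k^{t+1} - x^{t+1}‖²`. Since `y_k^t = -∇g_k(x^{τ_k(t)})` for `t ≥ 1`,
this cost is at most `L_k²/ρ_k ‖x^{τ_k(t+1)} - x^{τ_k(t)}‖²`. The triangle and Cauchy–Schwarz
inequalities bound this cost and the delay error by `T_k + 1` times the sum of the last `T_k + 1`
squared increments of `x`. After summing over `t`, each increment is counted at most `T_k + 1`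
times, and this gives `α_k`. The finitely many terms with index below `T̄` go into the constant.
-/

open Finset InnerProductSpace
open scoped Gradient

theorem sum_Icc_sum_Ico_le_mul_sum_range {f : ℕ → ℝ} (hf : ∀ j, 0 ≤ f j) (s t : ℕ) :
    ∑ i ∈ Icc 1 t, ∑ j ∈ Ico (i + 1 - s) (i + 1), f j ≤ s * ∑ j ∈ range (t + 1), f j := by
  -- `j` lies in the window of `i` only when `j ≤ i < j + s`, so at most `s` times
  rw [sum_comm' (t' := range (t + 1)) (s' := fun j => Icc 1 t ∩ Ico j (j + s)) (by
    intro i j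
    simp only [mem_Icc, mem_Ico, mem_inter, mem_range]
    omega), mul_sum]
  refine sum_le_sum fun j _ => ?_
  rw [sum_const, nsmul_eq_mul]
  gcongr
  · exact hf j
  · exact (card_le_card inter_subset_right).trans (Nat.card_Ico j (j + s)).le |>.trans (by omega)

theorem exists_sum_Icc_le_sum_Icc_add (f : ℕ → ℝ) (a b : ℕ) :
    ∃ c, ∀ t, ∑ i ∈ Icc a t, f i ≤ ∑ i ∈ Icc b t, f i + c := by
  classical
  refine ⟨∑ i ∈ range b, |f i| + ∑ i ∈ range a, |f i|, fun t => ?_⟩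
  have hab : ∑ i ∈ Icc a t \ Icc b t, f i ≤ ∑ i ∈ range b, |f i| :=
    (sum_le_sum fun i _ => le_abs_self (f i)).trans <| sum_le_sum_of_subset_of_nonneg
      (fun i => by simp only [mem_sdiff, mem_Icc, mem_range]; omega) fun _ _ _ => abs_nonneg _
  have hba : -∑ i ∈ Icc b t \ Icc a t, f i ≤ ∑ i ∈ range a, |f i| := by
    rw [← sum_neg_distrib]
    exact (sum_le_sum fun i _ => neg_le_abs (f i)).trans <| sum_le_sum_of_subset_of_nonneg
      (fun i => by simp only [mem_sdiff, mem_Icc, mem_range]; omega) fun _ _ _ => abs_nonneg _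
  linarith [sum_sdiff_sub_sum_sdiff (s₁ := Icc b t) (s₂ := Icc a t) (f := f)]

theorem add_sum_Icc_le_of_succ_le {a d e : ℕ → ℝ}
    (h : ∀ i, 1 ≤ i → a (i + 1) + d i ≤ a i + e i) (t : ℕ) :
    a (t + 1) + ∑ i ∈ Icc 1 t, d i ≤ a 1 + ∑ i ∈ Icc 1 t, e i := by
  induction t with
  | zero => simp
  | succ n ih =>
    rw [sum_Icc_succ_top (by omega), sum_Icc_succ_top (by omega)]
    linarith [h (n + 1) (by omega)]

section Sequences

variable {E : Type*} [SeminormedAddCommGroup E]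

theorem norm_sub_le_sum_Ico_norm_sub (x : ℕ → E) {lo hi a b : ℕ} (ha : a ∈ Icc lo hi)
    (hb : b ∈ Icc lo hi) : ‖x b - x a‖ ≤ ∑ j ∈ Ico lo hi, ‖x (j + 1) - x j‖ := by
  wlog hab : a ≤ b generalizing a b
  · rw [norm_sub_rev]
    exact this hb ha (le_of_not_ge hab)
  rw [mem_Icc] at ha hb
  calc ‖x b - x a‖ = dist (x a) (x b) := (dist_eq_norm' _ _).symm
    _ ≤ ∑ j ∈ Ico a b, dist (x j) (x (j + 1)) := dist_le_Ico_sum_dist x hab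
    _ ≤ ∑ j ∈ Ico lo hi, dist (x j) (x (j + 1)) :=
      sum_le_sum_of_subset_of_nonneg (Ico_subset_Ico ha.1 hb.2) fun _ _ _ => dist_nonneg
    _ = ∑ j ∈ Ico lo hi, ‖x (j + 1) - x j‖ := sum_congr rfl fun j _ => dist_eq_norm' _ _

theorem sq_norm_sub_le_mul_sum_Ico (x : ℕ → E) {lo hi a b : ℕ} (ha : a ∈ Icc lo hi)
    (hb : b ∈ Icc lo hi) :
    ‖x b - x a‖ ^ 2 ≤ (hi - lo : ℕ) * ∑ j ∈ Ico lo hi, ‖x (j + 1) - x j‖ ^ 2 := by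
  calc ‖x b - x a‖ ^ 2 ≤ (∑ j ∈ Ico lo hi, ‖x (j + 1) - x j‖) ^ 2 := by
        gcongr
        exact norm_sub_le_sum_Ico_norm_sub x ha hb
    _ ≤ _ := by simpa using sq_sum_le_card_mul_sum_sq (s := Ico lo hi)

/-- `∑ ‖x (j + 1) - x j‖ ^ 2` over the last `s` indices `j ≤ t`, or over all `j ≤ t` if `t < s`. -/
noncomputable def windowSqSum (x : ℕ → E) (s t : ℕ) : ℝ :=
  ∑ j ∈ Ico (t + 1 - s) (t + 1), ‖x (j + 1) - x j‖ ^ 2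

theorem sq_norm_sub_le_mul_windowSqSum (x : ℕ → E) {s t a b : ℕ} (ha : a ∈ Icc (t + 1 - s) (t + 1))
    (hb : b ∈ Icc (t + 1 - s) (t + 1)) : ‖x b - x a‖ ^ 2 ≤ s * windowSqSum x s t := by
  refine (sq_norm_sub_le_mul_sum_Ico x ha hb).trans ?_
  unfold windowSqSum
  gcongr
  exact_mod_cast (by omega : t + 1 - (t + 1 - s) ≤ s)

theorem sum_Icc_delay_errors_le (x : ℕ → E) {ρ L α : ℝ} {T : ℕ} (hρ : 0 < ρ) (hL : 0 ≤ L)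
    (hα : α = ρ - 2 * (1 / ρ + 7 * L / (2 * ρ ^ 2)) * L ^ 2 * ((T : ℝ) + 1) ^ 2 - L * (T : ℝ) ^ 2)
    (t : ℕ) :
    ∑ i ∈ Icc 1 t, ((1 / ρ + 7 * L / (2 * ρ ^ 2)) * L ^ 2 * ((T + 1) * windowSqSum x (T + 1) i)
        + L / 2 * (T * windowSqSum x T i))
      ≤ (ρ - α) / 2 * ∑ j ∈ range (t + 1), ‖x (j + 1) - x j‖ ^ 2 := by
  have hwin := sum_Icc_sum_Ico_le_mul_sum_range (fun j => sq_nonneg ‖x (j + 1) - x j‖) (t := t)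
  calc _ = (1 / ρ + 7 * L / (2 * ρ ^ 2)) * L ^ 2 * (T + 1) * ∑ i ∈ Icc 1 t, windowSqSum x (T + 1) i
        + L / 2 * T * ∑ i ∈ Icc 1 t, windowSqSum x T i := by
        simp only [sum_add_distrib, mul_sum, mul_assoc]
    _ ≤ (1 / ρ + 7 * L / (2 * ρ ^ 2)) * L ^ 2 * (T + 1)
          * ((T + 1) * ∑ j ∈ range (t + 1), ‖x (j + 1) - x j‖ ^ 2)
        + L / 2 * T * (T * ∑ j ∈ range (t + 1), ‖x (j + 1) - x j‖ ^ 2) := by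
        gcongr
        · exact_mod_cast hwin (T + 1)
        · exact hwin T
    _ = _ := by rw [hα]; ring

end Sequences

section InnerProductSpace

variable {E : Type*} [NormedAddCommGroup E] [InnerProductSpace ℝ E]

theorem le_add_inner_gradient_add_mul_sq [CompleteSpace E] {f : E → ℝ} {L : ℝ} (hL : 0 ≤ L)
    (hf : Differentiable ℝ f) (hlip : ∀ u v, ‖∇ f u - ∇ f v‖ ≤ L * ‖u - v‖) (u v : E) :
    f v ≤ f u + ⟪∇ f u, v - u⟫ + L * ‖v - u‖ ^ 2 := by
  have hmvt := (convex_closedBall u ‖v - u‖).norm_image_sub_le_of_norm_fderiv_le'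
    (fun w _ => hf w) (φ := toDual ℝ E (∇ f u)) (C := L * ‖v - u‖) ?_
    (Metric.mem_closedBall_self (norm_nonneg _)) (y := v) (by simp [dist_eq_norm])
  · rw [toDual_apply_apply, Real.norm_eq_abs, mul_assoc, ← sq] at hmvt
    linarith [le_abs_self (f v - f u - ⟪∇ f u, v - u⟫)]
  · intro w hw
    rw [← toDual_gradient, ← map_sub, LinearIsometryEquiv.norm_map]
    calc ‖∇ f w - ∇ f u‖ ≤ L * ‖w - u‖ := hlip w u
      _ ≤ L * ‖v - u‖ := by
        gcongr
        simpa [dist_eq_norm] using hw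

open Filter Topology in
theorem StrongConvexOn.add_mul_norm_sub_sq_le_of_isMinOn {s : Set E} {m : ℝ} {f : E → ℝ}
    (hf : StrongConvexOn s m f) {a b : E} (hmin : IsMinOn f s a) (ha : a ∈ s) (hb : b ∈ s) :
    f a + m / 2 * ‖b - a‖ ^ 2 ≤ f b := by
  have hlim : Tendsto (fun θ : ℝ => f a + (1 - θ) * (m / 2 * ‖b - a‖ ^ 2)) (𝓝[>] 0)
      (𝓝 (f a + m / 2 * ‖b - a‖ ^ 2)) := by
    refine tendsto_nhdsWithin_of_tendsto_nhds ?_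
    simpa using (tendsto_const_nhds (x := f a)).add
      (((tendsto_const_nhds (x := (1 : ℝ))).sub (tendsto_id (x := 𝓝 (0 : ℝ)))).mul
        (tendsto_const_nhds (x := m / 2 * ‖b - a‖ ^ 2)))
  refine le_of_tendsto hlim ?_
  filter_upwards [Ioo_mem_nhdsGT one_pos] with θ ⟨hθ0, hθ1⟩
  have hconv := hf.2 hb ha hθ0.le (sub_nonneg.2 hθ1.le) (add_sub_cancel θ 1)
  have hle := isMinOn_iff.1 hmin _ (hf.1 hb ha hθ0.le (sub_nonneg.2 hθ1.le) (add_sub_cancel θ 1))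
  simp only [smul_eq_mul] at hconv
  nlinarith

theorem linearized_prox_step_le [CompleteSpace E] {g : E → ℝ} {L ρ : ℝ} (hL : 0 ≤ L)
    (hg : Differentiable ℝ g) (hlip : ∀ u v, ‖∇ g u - ∇ g v‖ ≤ L * ‖u - v‖)
    {z z' x xd y : E} (hstep : y + ρ • (z' - x) = -∇ g xd) :
    g z' - g z + ⟪y, z' - z⟫ + ρ / 2 * (‖z' - x‖ ^ 2 - ‖z - x‖ ^ 2)
      ≤ -((ρ - 7 * L) / 2) * ‖z' - z‖ ^ 2 + L / 4 * ‖z' - x‖ ^ 2 + L / 2 * ‖x - xd‖ ^ 2 := by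
  have hprox : ⟪y, z' - z⟫ + ρ / 2 * (‖z' - x‖ ^ 2 - ‖z - x‖ ^ 2)
      = -⟪∇ g xd, z' - z⟫ - ρ / 2 * ‖z' - z‖ ^ 2 := by
    obtain rfl : y = -∇ g xd - ρ • (z' - x) := eq_sub_of_add_eq hstep
    rw [show z - x = (z' - x) - (z' - z) by abel, norm_sub_sq_real (z' - x), inner_sub_left,
      inner_neg_left, real_inner_smul_left]
    ring
  have hdesc := le_add_inner_gradient_add_mul_sq hL hg hlip z z'
  have hcs : ⟪∇ g z - ∇ g xd, z' - z⟫ ≤ L * ‖z - xd‖ * ‖z' - z‖ :=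
    (real_inner_le_norm _ _).trans (by gcongr; exact hlip z xd)
  have htri : ‖z - xd‖ ≤ ‖z' - z‖ + ‖z' - x‖ + ‖x - xd‖ := by
    calc ‖z - xd‖ = ‖-(z' - z) + (z' - x) + (x - xd)‖ := by congr 1; abel
      _ ≤ _ := norm_add₃_le.trans (by rw [norm_neg])
  rw [inner_sub_left] at hcs
  -- AM–GM on the two cross terms of `L ‖z - xd‖ ‖z' - z‖` produces the constants `7L`, `L/4`, `L/2`
  nlinarith [mul_le_mul_of_nonneg_left htri (mul_nonneg hL (norm_nonneg (z' - z))),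
    mul_nonneg hL (sq_nonneg (‖z' - x‖ - 2 * ‖z' - z‖)),
    mul_nonneg hL (sq_nonneg (‖x - xd‖ - ‖z' - z‖))]

variable {K : ℕ}

theorem augL_strongConvexOn (g : Fin K → E → ℝ) {h : E → ℝ} (ρ : Fin K → ℝ) (z y : Fin K → E)
    (hh : ConvexOn ℝ Set.univ h) {s : Set E} (hs : Convex ℝ s) :
    StrongConvexOn s (∑ k, ρ k) (fun u => augL g h ρ z u y) := by
  set w : E := -∑ k, (y k + ρ k • z k)
  set c : ℝ := ∑ k, (g k (z k) + ⟪y k, z k⟫ + ρ k / 2 * ‖z k‖ ^ 2)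
  have hsplit : ∀ u, augL g h ρ z u y - (∑ k, ρ k) / 2 * ‖u‖ ^ 2 = h u + ⟪w, u⟫ + c := by
    intro u
    simp only [augL, w, c, inner_sub_right, norm_sub_sq_real, real_inner_comm u, inner_neg_right,
      inner_sum, inner_add_right, real_inner_smul_right, mul_add, mul_sub, sum_add_distrib,
      sum_sub_distrib, sum_div, sum_mul]
    ring_nf
    simp only [mul_comm (‖u‖ ^ 2)]
    ring
  rw [strongConvexOn_iff_convex, funext hsplit]
  exact ((hh.subset (Set.subset_univ s) hs).add ((innerₛₗ ℝ w).convexOn hs)).add_const c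

theorem augL_dual_update (g : Fin K → E → ℝ) (h : E → ℝ) (ρ : Fin K → ℝ) (z : Fin K → E) (x : E)
    (y : Fin K → E) :
    augL g h ρ z x (fun k => y k + ρ k • (z k - x))
      = augL g h ρ z x y + ∑ k, ρ k * ‖z k - x‖ ^ 2 := by
  simp only [augL, inner_add_left, real_inner_smul_left, real_inner_self_eq_norm_sq,
    sum_add_distrib]
  ring

theorem augL_sub_augL (g : Fin K → E → ℝ) (h : E → ℝ) (ρ : Fin K → ℝ) (z' z : Fin K → E) (x : E)
    (y : Fin K → E) :
    augL g h ρ z' x y - augL g h ρ z x y = ∑ k, (g k (z' k) - g k (z k) + ⟪y k, z' k - z k⟫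
      + ρ k / 2 * (‖z' k - x‖ ^ 2 - ‖z k - x‖ ^ 2)) := by
  have hsplit : ∀ k, z' k - z k = (z' k - x) - (z k - x) := fun k => by abel
  simp only [augL, hsplit, inner_sub_right, mul_sub, sum_add_distrib, sum_sub_distrib]
  ring

variable [CompleteSpace E]

structure IsAsyncPADMM (g : Fin K → E → ℝ) (h : E → ℝ) (ρ : Fin K → ℝ) (T : Fin K → ℕ)
    (X : Set E) (x : ℕ → E) (xk y : Fin K → ℕ → E) (τ : Fin K → ℕ → ℕ) : Prop where
  delay_le : ∀ k t, τ k t ≤ t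
  le_delay_add : ∀ k t, t ≤ τ k t + T k
  mem : ∀ t, x t ∈ X
  isMinOn : ∀ t, IsMinOn (fun u => augL g h ρ (fun k => xk k t) u (fun k => y k t)) X (x (t + 1))
  xk_succ : ∀ k t, xk k (t + 1) = x (t + 1) - (ρ k)⁻¹ • (∇ (g k) (x (τ k (t + 1))) + y k t)
  y_succ : ∀ k t, y k (t + 1) = y k t + ρ k • (xk k (t + 1) - x (t + 1))

namespace IsAsyncPADMM

variable {g : Fin K → E → ℝ} {h : E → ℝ} {L ρ : Fin K → ℝ} {T : Fin K → ℕ} {X : Set E}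
  {x : ℕ → E} {xk y : Fin K → ℕ → E} {τ : Fin K → ℕ → ℕ}

theorem y_add_smul_eq_neg_gradient (hA : IsAsyncPADMM g h ρ T X x xk y τ) (hρ : ∀ k, ρ k ≠ 0)
    (k : Fin K) (t : ℕ) :
    y k t + ρ k • (xk k (t + 1) - x (t + 1)) = -∇ (g k) (x (τ k (t + 1))) := by
  rw [hA.xk_succ, sub_sub_cancel_left, smul_neg, smul_inv_smul₀ (hρ k)]
  abel

theorem augL_succ_add_le (hA : IsAsyncPADMM g h ρ T X x xk y τ) (hL : ∀ k, 0 ≤ L k)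
    (hρ : ∀ k, ρ k ≠ 0) (hdiff : ∀ k, Differentiable ℝ (g k))
    (hlip : ∀ k u v, ‖∇ (g k) u - ∇ (g k) v‖ ≤ L k * ‖u - v‖) (hh : ConvexOn ℝ Set.univ h)
    (hX : Convex ℝ X) (t : ℕ) :
    augL g h ρ (fun k => xk k (t + 1)) (x (t + 1)) (fun k => y k (t + 1))
      + ((∑ k, ρ k) / 2 * ‖x (t + 1) - x t‖ ^ 2
        + ∑ k, (ρ k - 7 * L k) / 2 * ‖xk k (t + 1) - xk k t‖ ^ 2)
      ≤ augL g h ρ (fun k => xk k t) (x t) (fun k => y k t)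
        + ∑ k, ((ρ k + L k / 4) * ‖xk k (t + 1) - x (t + 1)‖ ^ 2
          + L k / 2 * ‖x (t + 1) - x (τ k (t + 1))‖ ^ 2) := by
  have hdual := augL_dual_update g h ρ (fun k => xk k (t + 1)) (x (t + 1)) (fun k => y k t)
  simp only [← hA.y_succ] at hdual
  have hprimal := augL_sub_augL g h ρ (fun k => xk k (t + 1)) (fun k => xk k t) (x (t + 1))
    (fun k => y k t)
  have hprox := sum_le_sum fun k (_ : k ∈ univ) => linearized_prox_step_le (hL k) (hdiff k)
    (hlip k) (z := xk k t) (hA.y_add_smul_eq_neg_gradient hρ k t)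
  have hmin := (augL_strongConvexOn g ρ (fun k => xk k t) (fun k => y k t) hh hX
    ).add_mul_norm_sub_sq_le_of_isMinOn (hA.isMinOn t) (hA.mem (t + 1)) (hA.mem t)
  rw [hdual]
  rw [norm_sub_rev] at hmin
  simp only [sum_add_distrib, add_mul, neg_mul, sum_neg_distrib] at hprimal hprox ⊢
  linarith

theorem sq_norm_sub_x_delay_le (hA : IsAsyncPADMM g h ρ T X x xk y τ) (k : Fin K) (t : ℕ) :
    ‖x (t + 1) - x (τ k (t + 1))‖ ^ 2 ≤ T k * windowSqSum x (T k) t := by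
  have := hA.delay_le k (t + 1); have := hA.le_delay_add k (t + 1)
  exact sq_norm_sub_le_mul_windowSqSum x (mem_Icc.2 ⟨by omega, by omega⟩)
    (mem_Icc.2 ⟨by omega, le_rfl⟩)

theorem sq_mul_sq_norm_xk_sub_le (hA : IsAsyncPADMM g h ρ T X x xk y τ) (hρ : ∀ k, ρ k ≠ 0)
    (hlip : ∀ k u v, ‖∇ (g k) u - ∇ (g k) v‖ ≤ L k * ‖u - v‖) (k : Fin K) {t : ℕ} (ht : 1 ≤ t) :
    ρ k ^ 2 * ‖xk k (t + 1) - x (t + 1)‖ ^ 2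
      ≤ L k ^ 2 * ((T k + 1) * windowSqSum x (T k + 1) t) := by
  obtain ⟨s, rfl⟩ := Nat.exists_eq_add_of_le' ht
  have hstep := hA.y_add_smul_eq_neg_gradient hρ k (s + 1)
  rw [hA.y_succ, hA.y_add_smul_eq_neg_gradient hρ] at hstep
  have hwin : ‖x (τ k (s + 1)) - x (τ k (s + 1 + 1))‖ ^ 2
      ≤ (T k + 1 : ℕ) * windowSqSum x (T k + 1) (s + 1) := by
    have := hA.delay_le k (s + 1); have := hA.delay_le k (s + 1 + 1)
    have := hA.le_delay_add k (s + 1); have := hA.le_delay_add k (s + 1 + 1)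
    exact sq_norm_sub_le_mul_windowSqSum x (mem_Icc.2 ⟨by omega, by omega⟩)
      (mem_Icc.2 ⟨by omega, by omega⟩)
  push_cast at hwin
  calc ρ k ^ 2 * ‖xk k (s + 1 + 1) - x (s + 1 + 1)‖ ^ 2
      = ‖ρ k • (xk k (s + 1 + 1) - x (s + 1 + 1))‖ ^ 2 := by
        rw [norm_smul, mul_pow, Real.norm_eq_abs, sq_abs]
    _ = ‖∇ (g k) (x (τ k (s + 1))) - ∇ (g k) (x (τ k (s + 1 + 1)))‖ ^ 2 := by
        rw [eq_sub_of_add_eq' hstep, sub_neg_eq_add, neg_add_eq_sub]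
    _ ≤ (L k * ‖x (τ k (s + 1)) - x (τ k (s + 1 + 1))‖) ^ 2 := by gcongr; exact hlip k _ _
    _ ≤ _ := by rw [mul_pow]; gcongr

theorem augL_succ_add_le_of_one_le (hA : IsAsyncPADMM g h ρ T X x xk y τ) (hL : ∀ k, 0 ≤ L k)
    (hρ : ∀ k, 0 < ρ k) (hdiff : ∀ k, Differentiable ℝ (g k))
    (hlip : ∀ k u v, ‖∇ (g k) u - ∇ (g k) v‖ ≤ L k * ‖u - v‖) (hh : ConvexOn ℝ Set.univ h)
    (hX : Convex ℝ X) {t : ℕ} (ht : 1 ≤ t) :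
    augL g h ρ (fun k => xk k (t + 1)) (x (t + 1)) (fun k => y k (t + 1))
      + ((∑ k, ρ k) / 2 * ‖x (t + 1) - x t‖ ^ 2
        + ∑ k, (ρ k - 7 * L k) / 2 * ‖xk k (t + 1) - xk k t‖ ^ 2)
      ≤ augL g h ρ (fun k => xk k t) (x t) (fun k => y k t)
        + ∑ k, ((1 / ρ k + 7 * L k / (2 * ρ k ^ 2)) * L k ^ 2
            * ((T k + 1) * windowSqSum x (T k + 1) t)
          + L k / 2 * (T k * windowSqSum x (T k) t)) := by
  have hres : ∀ k, (ρ k + L k / 4) * ‖xk k (t + 1) - x (t + 1)‖ ^ 2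
      + L k / 2 * ‖x (t + 1) - x (τ k (t + 1))‖ ^ 2
      ≤ (1 / ρ k + 7 * L k / (2 * ρ k ^ 2)) * L k ^ 2
            * ((T k + 1) * windowSqSum x (T k + 1) t)
          + L k / 2 * (T k * windowSqSum x (T k) t) := by
    intro k
    have hcoef : 0 ≤ 1 / ρ k + 7 * L k / (2 * ρ k ^ 2) := by
      have := hρ k; have := hL k; positivity
    have hxk := mul_le_mul_of_nonneg_left
      (hA.sq_mul_sq_norm_xk_sub_le (fun k => (hρ k).ne') hlip k ht) hcoef
    have hdelay := mul_le_mul_of_nonneg_left (hA.sq_norm_sub_x_delay_le k t)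
      (div_nonneg (hL k) zero_le_two)
    have hρL : (ρ k + L k / 4) * ‖xk k (t + 1) - x (t + 1)‖ ^ 2
        ≤ (1 / ρ k + 7 * L k / (2 * ρ k ^ 2)) * (ρ k ^ 2 * ‖xk k (t + 1) - x (t + 1)‖ ^ 2) := by
      rw [← mul_assoc, show (1 / ρ k + 7 * L k / (2 * ρ k ^ 2)) * ρ k ^ 2 = ρ k + 7 * L k / 2 by
        field_simp [(hρ k).ne']]
      have := hL k
      gcongr ?_ * _
      linarith
    linarith
  linarith [sum_le_sum fun k (_ : k ∈ univ) => hres k,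
    hA.augL_succ_add_le hL (fun k => (hρ k).ne') hdiff hlip hh hX t]

theorem exists_augL_add_sum_le (hA : IsAsyncPADMM g h ρ T X x xk y τ) (hL : ∀ k, 0 < L k)
    (hρ : ∀ k, 0 < ρ k) (hdiff : ∀ k, Differentiable ℝ (g k))
    (hlip : ∀ k u v, ‖∇ (g k) u - ∇ (g k) v‖ ≤ L k * ‖u - v‖) (hh : ConvexOn ℝ Set.univ h)
    (hX : Convex ℝ X) {α : Fin K → ℝ}
    (hα : ∀ k, α k = ρ k - 2 * (1 / ρ k + 7 * L k / (2 * ρ k ^ 2)) * (L k) ^ 2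
      * ((T k : ℝ) + 1) ^ 2 - L k * (T k : ℝ) ^ 2) :
    ∃ C, ∀ t, augL g h ρ (fun k => xk k (t + 1)) (x (t + 1)) (fun k => y k (t + 1))
      + ∑ i ∈ Icc 1 t, ∑ k, ((ρ k - 7 * L k) / 2 * ‖xk k (i + 1) - xk k i‖ ^ 2
        + α k / 2 * ‖x (i + 1) - x i‖ ^ 2) ≤ C := by
  refine ⟨augL g h ρ (fun k => xk k 1) (x 1) (fun k => y k 1)
    + (∑ k, (ρ k - α k) / 2) * ‖x 1 - x 0‖ ^ 2, fun t => ?_⟩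
  have htel := add_sum_Icc_le_of_succ_le
    (a := fun i => augL g h ρ (fun k => xk k i) (x i) (fun k => y k i))
    (fun i hi => hA.augL_succ_add_le_of_one_le (fun k => (hL k).le) hρ hdiff hlip hh hX hi) t
  have hcount := fun k => sum_Icc_delay_errors_le x (hρ k) (hL k).le (hα k) t
  have hsplit : ∑ j ∈ range (t + 1), ‖x (j + 1) - x j‖ ^ 2
      = ‖x 1 - x 0‖ ^ 2 + ∑ i ∈ Icc 1 t, ‖x (i + 1) - x i‖ ^ 2 := by
    rw [range_eq_Ico, sum_eq_sum_Ico_succ_bot (by omega), Ico_add_one_right_eq_Icc]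
  have hdissip : ∀ i, ∑ k, ((ρ k - 7 * L k) / 2 * ‖xk k (i + 1) - xk k i‖ ^ 2
        + α k / 2 * ‖x (i + 1) - x i‖ ^ 2)
      = (∑ k, ρ k) / 2 * ‖x (i + 1) - x i‖ ^ 2
        + ∑ k, (ρ k - 7 * L k) / 2 * ‖xk k (i + 1) - xk k i‖ ^ 2
        - (∑ k, (ρ k - α k) / 2) * ‖x (i + 1) - x i‖ ^ 2 := by
    intro i
    simp only [sum_add_distrib, ← sum_mul, sum_div, sub_div, sum_sub_distrib]
    ring
  rw [sum_comm] at htel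
  rw [sum_congr rfl fun i _ => hdissip i, sum_sub_distrib, ← mul_sum]
  have hB : ∑ k, (ρ k - α k) / 2 * ∑ j ∈ range (t + 1), ‖x (j + 1) - x j‖ ^ 2
      = (∑ k, (ρ k - α k) / 2) * ‖x 1 - x 0‖ ^ 2
        + (∑ k, (ρ k - α k) / 2) * ∑ i ∈ Icc 1 t, ‖x (i + 1) - x i‖ ^ 2 := by
    rw [← sum_mul, hsplit, mul_add]
  linarith [sum_le_sum fun k (_ : k ∈ univ) => hcount k]

end IsAsyncPADMM

end InnerProductSpace

theorem stmt_8_general {E : Type*} [NormedAddCommGroup E] [InnerProductSpace ℝ E] [CompleteSpace E]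
    {K : ℕ} (g : Fin K → E → ℝ) (h : E → ℝ) (L ρ : Fin K → ℝ) (T : Fin K → ℕ)
    (X : Set E) (x : ℕ → E) (xk : Fin K → ℕ → E) (y : Fin K → ℕ → E) (τ : Fin K → ℕ → ℕ)
    (hL : ∀ k, 0 < L k) (hρ : ∀ k, 0 < ρ k)
    (hdiff : ∀ k, Differentiable ℝ (g k))
    (hlip : ∀ k, ∀ u v : E, ‖gradient (g k) u - gradient (g k) v‖ ≤ L k * ‖u - v‖)
    (hh : ConvexOn ℝ Set.univ h)
    (hXcv : Convex ℝ X)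
    (hτ1 : ∀ k t, τ k t ≤ t) (hτ2 : ∀ k t, t ≤ τ k t + T k)
    (hxmem : ∀ t, x t ∈ X)
    (hxupd : ∀ t, ∀ u ∈ X,
      augL g h ρ (fun k => xk k t) (x (t + 1)) (fun k => y k t)
        ≤ augL g h ρ (fun k => xk k t) u (fun k => y k t))
    (hxk : ∀ k t, xk k (t + 1)
      = x (t + 1) - (ρ k)⁻¹ • (gradient (g k) (x (τ k (t + 1))) + y k t))
    (hy : ∀ k t, y k (t + 1) = y k t + ρ k • (xk k (t + 1) - x (t + 1)))
    (Tbar : ℕ)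
    (α : Fin K → ℝ)
    (hα : ∀ k, α k = ρ k - 2 * (1 / ρ k + 7 * L k / (2 * ρ k ^ 2)) * (L k) ^ 2
      * ((T k : ℝ) + 1) ^ 2 - L k * (T k : ℝ) ^ 2) :
    ∃ C : ℝ, ∀ t : ℕ, 1 ≤ t →
      augL g h ρ (fun k => xk k (t + 1)) (x (t + 1)) (fun k => y k (t + 1))
        ≤ C - ∑ i ∈ Finset.Icc Tbar t, ∑ k,
            ((ρ k - 7 * L k) / 2 * ‖xk k (i + 1) - xk k i‖ ^ 2
              + α k / 2 * ‖x (i + 1) - x i‖ ^ 2) := by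
  have hA : IsAsyncPADMM g h ρ T X x xk y τ :=
    ⟨hτ1, hτ2, hxmem, fun t => isMinOn_iff.2 (hxupd t), hxk, hy⟩
  obtain ⟨C₀, hC₀⟩ := hA.exists_augL_add_sum_le hL hρ hdiff hlip hh hXcv hα
  obtain ⟨c, hc⟩ := exists_sum_Icc_le_sum_Icc_add (fun i => ∑ k,
    ((ρ k - 7 * L k) / 2 * ‖xk k (i + 1) - xk k i‖ ^ 2 + α k / 2 * ‖x (i + 1) - x i‖ ^ 2)) Tbar 1
  exact ⟨C₀ + c, fun t _ => by linarith [hC₀ t, hc t]⟩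

/-- (Lemma 3.3) Summed descent estimate for the augmented Lagrangian of
Async-PADMM: there is a constant `C` such that for all `t ≥ 1`,
`L^{t+1} ≤ C − ∑_{i=T̄}^{t} ∑_k [((ρ_k − 7L_k)/2)‖x_k^{i+1} − x_k^i‖²
  + (α_k/2)‖x^{i+1} − x^i‖²]`, where `T̄ = max_k T_k` and
`α_k = ρ_k − 2(1/ρ_k + 7L_k/(2ρ_k²))L_k²(T_k+1)² − L_k T_k²`. -/
theorem stmt_8 {E : Type*} [NormedAddCommGroup E] [InnerProductSpace ℝ E] [CompleteSpace E]
    {K : ℕ} (g : Fin K → E → ℝ) (h : E → ℝ) (L ρ : Fin K → ℝ) (T : Fin K → ℕ)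
    (X : Set E) (x : ℕ → E) (xk : Fin K → ℕ → E) (y : Fin K → ℕ → E) (τ : Fin K → ℕ → ℕ)
    (hL : ∀ k, 0 < L k) (hρ : ∀ k, 0 < ρ k)
    (hdiff : ∀ k, Differentiable ℝ (g k))
    (hlip : ∀ k, ∀ u v : E, ‖gradient (g k) u - gradient (g k) v‖ ≤ L k * ‖u - v‖)
    (hh : ConvexOn ℝ Set.univ h)
    (hXne : X.Nonempty) (hXcp : IsCompact X) (hXcv : Convex ℝ X)
    (hτ1 : ∀ k t, τ k t ≤ t) (hτ2 : ∀ k t, t ≤ τ k t + T k)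
    (hxmem : ∀ t, x t ∈ X)
    (hxupd : ∀ t, ∀ u ∈ X,
      augL g h ρ (fun k => xk k t) (x (t + 1)) (fun k => y k t)
        ≤ augL g h ρ (fun k => xk k t) u (fun k => y k t))
    (hxk : ∀ k t, xk k (t + 1)
      = x (t + 1) - (ρ k)⁻¹ • (gradient (g k) (x (τ k (t + 1))) + y k t))
    (hy : ∀ k t, y k (t + 1) = y k t + ρ k • (xk k (t + 1) - x (t + 1)))
    (Tbar : ℕ) (hTbar : Tbar = Finset.univ.sup T)
    (α : Fin K → ℝ)
    (hα : ∀ k, α k = ρ k - 2 * (1 / ρ k + 7 * L k / (2 * ρ k ^ 2)) * (L k) ^ 2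
      * ((T k : ℝ) + 1) ^ 2 - L k * (T k : ℝ) ^ 2) :
    ∃ C : ℝ, ∀ t : ℕ, 1 ≤ t →
      augL g h ρ (fun k => xk k (t + 1)) (x (t + 1)) (fun k => y k (t + 1))
        ≤ C - ∑ i ∈ Finset.Icc Tbar t, ∑ k,
            ((ρ k - 7 * L k) / 2 * ‖xk k (i + 1) - xk k i‖ ^ 2
              + α k / 2 * ‖x (i + 1) - x i‖ ^ 2) :=
  stmt_8_general g h L ρ T X x xk y τ hL hρ hdiff hlip hh hXcv hτ1 hτ2 hxmem hxupd hxk hy Tbar α hα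
end

section
/- Suppose for each k the dual variable satisfies y_k = −∇g_k(w_k) for some point w_k ∈ E, where each g_k is differentiable with L_k-Lipschitz gradient. Then for any points x⁺ ∈ E and x_k⁺ ∈ E (k = 1,…,K): L({x_k⁺}, x⁺; y) ≥ f(x⁺) + Σ_{k=1}^K [ ((ρ_k − 4L_k)/2)‖x_k⁺ − x⁺‖² − (L_k/2)‖w_k − x⁺‖² ], where f(x) := Σ_{k=1}^K g_k(x) + h(x). -/
/-!
Per block, the descent lemma for `g_k` at `x_k⁺` bounds `g_k(x⁺)` by the linearisation of `g_k`
at `x_k⁺`. Replacing `∇g_k(x_k⁺)` there by `∇g_k(w_k) = -y_k` costs at most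
`L_k ‖w_k - x_k⁺‖ ‖x_k⁺ - x⁺‖`, and the triangle inequality through `x⁺` followed by
`st ≤ (s² + t²)/2` turns this into `(3L_k/2)‖x_k⁺ - x⁺‖² + (L_k/2)‖w_k - x⁺‖²`.
Summing over `k` and adding `h(x⁺)` gives the bound.
-/

open RealInnerProductSpace

lemma augL_eq_add_sum {E : Type*} [NormedAddCommGroup E] [InnerProductSpace ℝ E]
    {K : ℕ} (g : Fin K → E → ℝ) (h : E → ℝ) (ρ : Fin K → ℝ)
    (xk : Fin K → E) (x : E) (y : Fin K → E) :
    augL g h ρ xk x y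
      = h x + ∑ k, (g k (xk k) + ⟪y k, xk k - x⟫ + ρ k / 2 * ‖xk k - x‖ ^ 2) := by
  simp only [augL, Finset.sum_add_distrib]
  ring

section LipschitzGradient

variable {E : Type*} [NormedAddCommGroup E] [InnerProductSpace ℝ E] [CompleteSpace E]
  {g : E → ℝ} {L : ℝ}

lemma Differentiable.hasDerivAt_comp_add_smul (hg : Differentiable ℝ g) (a v : E) (t : ℝ) :
    HasDerivAt (fun s : ℝ => g (a + s • v)) ⟪gradient g (a + t • v), v⟫ t := by
  have hline : HasDerivAt (fun s : ℝ => a + s • v) v t := by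
    simpa using ((hasDerivAt_id t).smul_const v).const_add a
  simpa [Function.comp_def] using (hg (a + t • v)).hasGradientAt.hasFDerivAt.comp_hasDerivAt t hline

lemma image_le_add_inner_gradient_add_sq (hg : Differentiable ℝ g)
    (hlip : ∀ u v : E, ‖gradient g u - gradient g v‖ ≤ L * ‖u - v‖) (a b : E) :
    g b ≤ g a + ⟪gradient g a, b - a⟫ + L / 2 * ‖b - a‖ ^ 2 := by
  set v := b - a
  let φ : ℝ → ℝ := fun t => g (a + t • v) - t * ⟪gradient g a, v⟫ - g a
  let B : ℝ → ℝ := fun t => L / 2 * ‖v‖ ^ 2 * t ^ 2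
  have hφ : ∀ t, HasDerivAt φ (⟪gradient g (a + t • v) - gradient g a, v⟫) t := fun t => by
    refine (((hg.hasDerivAt_comp_add_smul a v t).sub
      ((hasDerivAt_id t).mul_const ⟪gradient g a, v⟫)).sub_const (g a)).congr_deriv ?_
    rw [one_mul, inner_sub_left]
  have hB : ∀ t, HasDerivAt B (L * ‖v‖ ^ 2 * t) t := fun t => by
    refine ((hasDerivAt_pow 2 t).const_mul (L / 2 * ‖v‖ ^ 2)).congr_deriv ?_
    simp only [Nat.cast_ofNat]
    ring
  have hφB : ∀ t ∈ Set.Ico (0 : ℝ) 1,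
      ⟪gradient g (a + t • v) - gradient g a, v⟫ ≤ L * ‖v‖ ^ 2 * t := by
    rintro t ⟨ht, -⟩
    calc ⟪gradient g (a + t • v) - gradient g a, v⟫
        ≤ ‖gradient g (a + t • v) - gradient g a‖ * ‖v‖ := real_inner_le_norm _ _
      _ ≤ L * ‖a + t • v - a‖ * ‖v‖ := by gcongr; exact hlip _ _
      _ = L * ‖v‖ ^ 2 * t := by
        rw [add_sub_cancel_left, norm_smul, Real.norm_eq_abs, abs_of_nonneg ht]
        ring
  have h1 : φ 1 ≤ B 1 :=
    image_le_of_deriv_right_le_deriv_boundary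
      (fun t _ => (hφ t).continuousAt.continuousWithinAt) (fun t _ => (hφ t).hasDerivWithinAt)
      (by simp [φ, B]) (fun t _ => (hB t).continuousAt.continuousWithinAt)
      (fun t _ => (hB t).hasDerivWithinAt) hφB (by simp)
  simp only [φ, B, v, one_smul, add_sub_cancel, one_mul, one_pow, mul_one] at h1
  linarith

lemma image_le_sub_inner_gradient_add_sq (hL : 0 ≤ L) (hg : Differentiable ℝ g)
    (hlip : ∀ u v : E, ‖gradient g u - gradient g v‖ ≤ L * ‖u - v‖) (a b c : E) :
    g b ≤ g a - ⟪gradient g c, a - b⟫ + 2 * L * ‖a - b‖ ^ 2 + L / 2 * ‖c - b‖ ^ 2 := by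
  have hmove : ⟪gradient g c - gradient g a, a - b⟫ ≤ L * (‖c - b‖ + ‖a - b‖) * ‖a - b‖ :=
    calc ⟪gradient g c - gradient g a, a - b⟫
        ≤ ‖gradient g c - gradient g a‖ * ‖a - b‖ := real_inner_le_norm _ _
      _ ≤ L * ‖c - a‖ * ‖a - b‖ := by gcongr; exact hlip _ _
      _ ≤ L * (‖c - b‖ + ‖a - b‖) * ‖a - b‖ := by
        gcongr
        simpa only [norm_sub_rev b a] using norm_sub_le_norm_sub_add_norm_sub c b a
  calc g b ≤ g a + ⟪gradient g a, b - a⟫ + L / 2 * ‖b - a‖ ^ 2 :=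
        image_le_add_inner_gradient_add_sq hg hlip a b
    _ = g a - ⟪gradient g c, a - b⟫ + ⟪gradient g c - gradient g a, a - b⟫
          + L / 2 * ‖a - b‖ ^ 2 := by
        rw [inner_sub_left, norm_sub_rev, ← neg_sub a b, inner_neg_right]
        ring
    _ ≤ g a - ⟪gradient g c, a - b⟫ + L * (‖c - b‖ + ‖a - b‖) * ‖a - b‖
          + L / 2 * ‖a - b‖ ^ 2 := by gcongr
    _ ≤ g a - ⟪gradient g c, a - b⟫ + 2 * L * ‖a - b‖ ^ 2 + L / 2 * ‖c - b‖ ^ 2 := by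
        nlinarith [mul_nonneg hL (sq_nonneg (‖c - b‖ - ‖a - b‖))]

end LipschitzGradient

theorem stmt_9_general {E : Type*} [NormedAddCommGroup E] [InnerProductSpace ℝ E] [CompleteSpace E]
    {K : ℕ} (g : Fin K → E → ℝ) (h : E → ℝ) (L ρ : Fin K → ℝ)
    (hL : ∀ k, 0 < L k)
    (hdiff : ∀ k, Differentiable ℝ (g k))
    (hlip : ∀ k, ∀ u v : E, ‖gradient (g k) u - gradient (g k) v‖ ≤ L k * ‖u - v‖)
    (w : Fin K → E) (y : Fin K → E)
    (hy : ∀ k, y k = -gradient (g k) (w k))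
    (xp : E) (xkp : Fin K → E) :
    augL g h ρ xkp xp y
      ≥ ((∑ k, g k xp) + h xp)
        + ∑ k, ((ρ k - 4 * L k) / 2 * ‖xkp k - xp‖ ^ 2 - L k / 2 * ‖w k - xp‖ ^ 2) := by
  have hblock : ∀ k, g k xp + ((ρ k - 4 * L k) / 2 * ‖xkp k - xp‖ ^ 2
      - L k / 2 * ‖w k - xp‖ ^ 2)
      ≤ g k (xkp k) + ⟪y k, xkp k - xp⟫ + ρ k / 2 * ‖xkp k - xp‖ ^ 2 := fun k => by
    have := image_le_sub_inner_gradient_add_sq (hL k).le (hdiff k) (hlip k) (xkp k) xp (w k)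
    rw [hy k, inner_neg_left]
    linarith
  rw [augL_eq_add_sum, ge_iff_le, add_right_comm, ← Finset.sum_add_distrib, add_comm (h xp)]
  exact add_le_add_left (Finset.sum_le_sum fun k _ => hblock k) _

/-- Chain of inequalities (32) in the proof of Lemma 3.4: if the dual variables
satisfy `y_k = −∇g_k(w_k)`, then
`L({x_k⁺}, x⁺; y) ≥ f(x⁺) + ∑_k [((ρ_k − 4L_k)/2)‖x_k⁺ − x⁺‖² − (L_k/2)‖w_k − x⁺‖²]`. -/
theorem stmt_9 {E : Type*} [NormedAddCommGroup E] [InnerProductSpace ℝ E] [CompleteSpace E]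
    {K : ℕ} (g : Fin K → E → ℝ) (h : E → ℝ) (L ρ : Fin K → ℝ)
    (hL : ∀ k, 0 < L k) (hρ : ∀ k, 0 < ρ k)
    (hdiff : ∀ k, Differentiable ℝ (g k))
    (hlip : ∀ k, ∀ u v : E, ‖gradient (g k) u - gradient (g k) v‖ ≤ L k * ‖u - v‖)
    (hh : ConvexOn ℝ Set.univ h)
    (w : Fin K → E) (y : Fin K → E)
    (hy : ∀ k, y k = -gradient (g k) (w k))
    (xp : E) (xkp : Fin K → E) :
    augL g h ρ xkp xp y
      ≥ ((∑ k, g k xp) + h xp)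
        + ∑ k, ((ρ k - 4 * L k) / 2 * ‖xkp k - xp‖ ^ 2 - L k / 2 * ‖w k - xp‖ ^ 2) :=
  stmt_9_general g h L ρ hL hdiff hlip w y hy xp xkp
end

section
/- Suppose each g_k is convex and differentiable with L_k-Lipschitz gradient, and the dual variables satisfy y_k = −∇g_k(w_k) for some points w_k ∈ E. Then for any points x⁺ ∈ E and x_k⁺ ∈ E (k = 1,…,K): L({x_k⁺}, x⁺; y) ≥ f(x⁺) + Σ_{k=1}^K [ ((ρ_k − L_k)/2)‖x_k⁺ − x⁺‖² − (L_k/2)‖w_k − x⁺‖² ], where f(x) := Σ_{k=1}^K g_k(x) + h(x). -/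
/-!
For each `k`, convexity of `g_k` at `w_k` bounds `g_k(x_k⁺)` from below by its tangent at `w_k`,
and the descent lemma for the `L_k`-smooth `g_k` bounds `g_k(x⁺)` from above by the same tangent
plus `(L_k/2)‖x⁺ − w_k‖²`. Subtracting, `g_k(x⁺) ≤ g_k(x_k⁺) + ⟨y_k, x_k⁺ − x⁺⟩ + (L_k/2)‖w_k − x⁺‖²`
since `y_k = −∇g_k(w_k)`; summing over `k` gives the bound, even with the weaker coefficient
`(ρ_k − L_k)/2` on `‖x_k⁺ − x⁺‖²`.
-/
open RealInnerProductSpace AffineMap Set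

section NormedSpace

variable {F : Type*} [NormedAddCommGroup F] [NormedSpace ℝ F] {f : F → ℝ}

theorem hasDerivAt_comp_lineMap {x z : F} {t : ℝ} (hf : DifferentiableAt ℝ f (lineMap x z t)) :
    HasDerivAt (fun s : ℝ ↦ f (lineMap x z s)) (fderiv ℝ f (lineMap x z t) (z - x)) t :=
  hf.hasFDerivAt.comp_hasDerivAt t hasDerivAt_lineMap

theorem ConvexOn.add_fderiv_sub_le (hf : ConvexOn ℝ univ f) {x : F}
    (hfx : DifferentiableAt ℝ f x) (z : F) : f x + fderiv ℝ f x (z - x) ≤ f z := by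
  have hline : ConvexOn ℝ univ (fun s : ℝ ↦ f (lineMap x z s)) := by
    have := hf.comp_affineMap (lineMap x z : ℝ →ᵃ[ℝ] F)
    rwa [preimage_univ] at this
  have hderiv : HasDerivAt (fun s : ℝ ↦ f (lineMap x z s)) (fderiv ℝ f x (z - x)) 0 := by
    simpa only [lineMap_apply_zero] using
      hasDerivAt_comp_lineMap (x := x) (z := z) (t := 0) (by rwa [lineMap_apply_zero])
  have hslope := hline.le_slope_of_hasDerivAt (mem_univ 0) (mem_univ 1) one_pos hderiv
  rw [slope_def_field, lineMap_apply_zero, lineMap_apply_one, sub_zero, div_one] at hslope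
  linarith

theorem le_add_fderiv_sub_add_sq {L : ℝ} (hf : Differentiable ℝ f)
    (hlip : ∀ u v, ‖fderiv ℝ f u - fderiv ℝ f v‖ ≤ L * ‖u - v‖) (x z : F) :
    f z ≤ f x + fderiv ℝ f x (z - x) + L / 2 * ‖z - x‖ ^ 2 := by
  set ψ : ℝ → ℝ := fun t ↦
    f (lineMap x z t) - t * fderiv ℝ f x (z - x) - L / 2 * ‖z - x‖ ^ 2 * t ^ 2
  set ψ' : ℝ → ℝ := fun t ↦
    fderiv ℝ f (lineMap x z t) (z - x) - fderiv ℝ f x (z - x) - L * ‖z - x‖ ^ 2 * t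
  have hψ : ∀ t, HasDerivAt ψ (ψ' t) t := by
    intro t
    refine (((hasDerivAt_comp_lineMap (hf _)).sub (hasDerivAt_mul_const _)).sub
      ((hasDerivAt_pow 2 t).const_mul (L / 2 * ‖z - x‖ ^ 2))).congr_deriv ?_
    simp only [ψ']
    push_cast
    ring
  have hψ'_nonpos : ∀ t ∈ interior (Icc (0 : ℝ) 1), ψ' t ≤ 0 := by
    intro t ht
    rw [interior_Icc] at ht
    have hincrement :
        fderiv ℝ f (lineMap x z t) (z - x) - fderiv ℝ f x (z - x) ≤ L * ‖z - x‖ ^ 2 * t :=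
      calc _ = (fderiv ℝ f (lineMap x z t) - fderiv ℝ f x) (z - x) := rfl
        _ ≤ ‖fderiv ℝ f (lineMap x z t) - fderiv ℝ f x‖ * ‖z - x‖ :=
          (Real.le_norm_self _).trans (ContinuousLinearMap.le_opNorm _ _)
        _ ≤ L * ‖lineMap x z t - x‖ * ‖z - x‖ := by gcongr; exact hlip _ _
        _ = L * ‖z - x‖ ^ 2 * t := by
          rw [← vsub_eq_sub, lineMap_vsub_left, vsub_eq_sub, norm_smul,
            Real.norm_of_nonneg ht.1.le]
          ring
    simp only [ψ']
    linarith
  have hanti : AntitoneOn ψ (Icc 0 1) :=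
    antitoneOn_of_hasDerivWithinAt_nonpos (convex_Icc 0 1)
      (HasDerivAt.continuousOn fun t _ ↦ hψ t) (fun t _ ↦ (hψ t).hasDerivWithinAt) hψ'_nonpos
  have hψ01 := hanti (left_mem_Icc.2 zero_le_one) (right_mem_Icc.2 zero_le_one) zero_le_one
  simp only [ψ, lineMap_apply_zero, lineMap_apply_one] at hψ01
  linarith

theorem ConvexOn.le_sub_fderiv_add_sq {L : ℝ} (hconv : ConvexOn ℝ univ f)
    (hf : Differentiable ℝ f) (hlip : ∀ u v, ‖fderiv ℝ f u - fderiv ℝ f v‖ ≤ L * ‖u - v‖)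
    (w x z : F) : f x ≤ f z - fderiv ℝ f w (z - x) + L / 2 * ‖x - w‖ ^ 2 := by
  have htangent := hconv.add_fderiv_sub_le (hf w) z
  have hdescent := le_add_fderiv_sub_add_sq hf hlip w x
  have hlin : fderiv ℝ f w (z - w) - fderiv ℝ f w (x - w) = fderiv ℝ f w (z - x) := by
    rw [← map_sub, sub_sub_sub_cancel_right]
  linarith

end NormedSpace

theorem norm_fderiv_sub_fderiv {E : Type*} [NormedAddCommGroup E] [InnerProductSpace ℝ E]
    [CompleteSpace E] (f : E → ℝ) (u v : E) :
    ‖fderiv ℝ f u - fderiv ℝ f v‖ = ‖gradient f u - gradient f v‖ := by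
  rw [← toDual_gradient, ← toDual_gradient, ← map_sub, LinearIsometryEquiv.norm_map]

theorem stmt_15_general {E : Type*} [NormedAddCommGroup E] [InnerProductSpace ℝ E] [CompleteSpace E]
    {K : ℕ} (g : Fin K → E → ℝ) (h : E → ℝ) (L ρ : Fin K → ℝ)
    (hL : ∀ k, 0 < L k)
    (hgcvx : ∀ k, ConvexOn ℝ Set.univ (g k))
    (hdiff : ∀ k, Differentiable ℝ (g k))
    (hlip : ∀ k, ∀ u v : E, ‖gradient (g k) u - gradient (g k) v‖ ≤ L k * ‖u - v‖)
    (w : Fin K → E) (y : Fin K → E)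
    (hy : ∀ k, y k = -gradient (g k) (w k))
    (xp : E) (xkp : Fin K → E) :
    augL g h ρ xkp xp y
      ≥ ((∑ k, g k xp) + h xp)
        + ∑ k, ((ρ k - L k) / 2 * ‖xkp k - xp‖ ^ 2 - L k / 2 * ‖w k - xp‖ ^ 2) := by
  have hterm : ∀ k, g k xp + ((ρ k - L k) / 2 * ‖xkp k - xp‖ ^ 2 - L k / 2 * ‖w k - xp‖ ^ 2)
      ≤ g k (xkp k) + ⟪y k, xkp k - xp⟫ + ρ k / 2 * ‖xkp k - xp‖ ^ 2 := by
    intro k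
    have hlip' u v := (norm_fderiv_sub_fderiv (g k) u v).trans_le (hlip k u v)
    have hbound := (hgcvx k).le_sub_fderiv_add_sq (hdiff k) hlip' (w k) xp (xkp k)
    have hL_sq := mul_nonneg (hL k).le (sq_nonneg ‖xkp k - xp‖)
    rw [hy k, inner_neg_left, inner_gradient_left, norm_sub_rev (w k)]
    linarith
  have hsum := Finset.sum_le_sum (s := Finset.univ) fun k _ ↦ hterm k
  simp only [Finset.sum_add_distrib] at hsum
  unfold augL
  linarith

/-- Improved lower bound (39) used in the proof of Corollary 3.1(1): when every
`g_k` is convex and the dual variables satisfy `y_k = −∇g_k(w_k)`,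
`L({x_k⁺}, x⁺; y) ≥ f(x⁺) + ∑_k [((ρ_k − L_k)/2)‖x_k⁺ − x⁺‖² − (L_k/2)‖w_k − x⁺‖²]`. -/
theorem stmt_15 {E : Type*} [NormedAddCommGroup E] [InnerProductSpace ℝ E] [CompleteSpace E]
    {K : ℕ} (g : Fin K → E → ℝ) (h : E → ℝ) (L ρ : Fin K → ℝ)
    (hL : ∀ k, 0 < L k) (hρ : ∀ k, 0 < ρ k)
    (hgcvx : ∀ k, ConvexOn ℝ Set.univ (g k))
    (hdiff : ∀ k, Differentiable ℝ (g k))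
    (hlip : ∀ k, ∀ u v : E, ‖gradient (g k) u - gradient (g k) v‖ ≤ L k * ‖u - v‖)
    (hh : ConvexOn ℝ Set.univ h)
    (w : Fin K → E) (y : Fin K → E)
    (hy : ∀ k, y k = -gradient (g k) (w k))
    (xp : E) (xkp : Fin K → E) :
    augL g h ρ xkp xp y
      ≥ ((∑ k, g k xp) + h xp)
        + ∑ k, ((ρ k - L k) / 2 * ‖xkp k - xp‖ ^ 2 - L k / 2 * ‖w k - xp‖ ^ 2) :=
  stmt_15_general g h L ρ hL hgcvx hdiff hlip w y hy xp xkp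
end
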